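/- Fix α, γ ∈ ℝ³ and β ∈ ℝ, and define Ψ, Γ : G → ℝ³ on the Galilei group by Ψ_i(t, a, v, R) = (R_{ij} − δ_{ij}) α_j and Γ_i(t, a, v, R) = (R_{ij} − δ_{ij}) γ_j + β v_i + ε_{ijk} α_l R_{jl} v_k. Then for all g = (t, a, v, R) and g' = (t', a', v', R') in G, with gg' computed by the Galilei multiplication law: Ψ_i(gg') = Ψ_i(g) + R_{il} Ψ_l(g') and Γ_i(gg') = Γ_i(g) + R_{il} Γ_l(g') − ε_{ink} v_n R_{kl} Ψ_l(g'). -/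
import Mathlib


/-- The Levi-Civita symbol on `{1,2,3}` (indexed by `Fin 3`). -/
def eps (i j k : Fin 3) : ℝ :=
  if (i, j, k) = (0, 1, 2) ∨ (i, j, k) = (1, 2, 0) ∨ (i, j, k) = (2, 0, 1) then 1
  else if (i, j, k) = (2, 1, 0) ∨ (i, j, k) = (1, 0, 2) ∨ (i, j, k) = (0, 2, 1) then -1
  else 0

/-- The Kronecker delta on `Fin 3`. -/
def kron (i j : Fin 3) : ℝ := if i = j then 1 else 0

/-- Elements of the (raw) Galilei data `(t, a, v, R)`. -/
abbrev GalElt : Type :=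
  ℝ × (Fin 3 → ℝ) × (Fin 3 → ℝ) × Matrix (Fin 3) (Fin 3) ℝ

/-- `SO(3)`: real orthogonal `3×3` matrices of determinant `1`. -/
def SO3 : Set (Matrix (Fin 3) (Fin 3) ℝ) :=
  {R | R * R.transpose = 1 ∧ R.det = 1}

/-- The Galilei multiplication law (the first argument is the left factor). -/
def galMul (g g' : GalElt) : GalElt :=
  (g.1 + g'.1,
   g.2.1 + g.2.2.2.mulVec g'.2.1 + g'.1 • g.2.2.1,
   g.2.2.1 + g.2.2.2.mulVec g'.2.2.1,
   g.2.2.2 * g'.2.2.2)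

/-- `Ψ_i(t,a,v,R) = (R_{ij} − δ_{ij}) α_j`. -/
def PsiF (α : Fin 3 → ℝ) (g : GalElt) (i : Fin 3) : ℝ :=
  ∑ j, (g.2.2.2 i j - kron i j) * α j

/-- `Γ_i(t,a,v,R) = (R_{ij} − δ_{ij}) γ_j + β v_i + ε_{ijk} α_l R_{jl} v_k`. -/
def GamF (α γv : Fin 3 → ℝ) (β : ℝ) (g : GalElt) (i : Fin 3) : ℝ :=
  (∑ j, (g.2.2.2 i j - kron i j) * γv j) + β * g.2.2.1 i
    + ∑ j, ∑ k, ∑ l, eps i j k * α l * g.2.2.2 j l * g.2.2.1 k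

lemma eps_000 : eps 0 0 0 = 0 := rfl
lemma eps_001 : eps 0 0 1 = 0 := rfl
lemma eps_002 : eps 0 0 2 = 0 := rfl
lemma eps_010 : eps 0 1 0 = 0 := rfl
lemma eps_011 : eps 0 1 1 = 0 := rfl
lemma eps_012 : eps 0 1 2 = 1 := rfl
lemma eps_020 : eps 0 2 0 = 0 := rfl
lemma eps_021 : eps 0 2 1 = -1 := rfl
lemma eps_022 : eps 0 2 2 = 0 := rfl
lemma eps_100 : eps 1 0 0 = 0 := rfl
lemma eps_101 : eps 1 0 1 = 0 := rfl
lemma eps_102 : eps 1 0 2 = -1 := rfl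
lemma eps_110 : eps 1 1 0 = 0 := rfl
lemma eps_111 : eps 1 1 1 = 0 := rfl
lemma eps_112 : eps 1 1 2 = 0 := rfl
lemma eps_120 : eps 1 2 0 = 1 := rfl
lemma eps_121 : eps 1 2 1 = 0 := rfl
lemma eps_122 : eps 1 2 2 = 0 := rfl
lemma eps_200 : eps 2 0 0 = 0 := rfl
lemma eps_201 : eps 2 0 1 = 1 := rfl
lemma eps_202 : eps 2 0 2 = 0 := rfl
lemma eps_210 : eps 2 1 0 = -1 := rfl
lemma eps_211 : eps 2 1 1 = 0 := rfl
lemma eps_212 : eps 2 1 2 = 0 := rfl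
lemma eps_220 : eps 2 2 0 = 0 := rfl
lemma eps_221 : eps 2 2 1 = 0 := rfl
lemma eps_222 : eps 2 2 2 = 0 := rfl
lemma kron_00 : kron 0 0 = 1 := rfl
lemma kron_01 : kron 0 1 = 0 := rfl
lemma kron_02 : kron 0 2 = 0 := rfl
lemma kron_10 : kron 1 0 = 0 := rfl
lemma kron_11 : kron 1 1 = 1 := rfl
lemma kron_12 : kron 1 2 = 0 := rfl
lemma kron_20 : kron 2 0 = 0 := rfl
lemma kron_21 : kron 2 1 = 0 := rfl
lemma kron_22 : kron 2 2 = 1 := rfl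

set_option maxHeartbeats 10000000 in
/-- The maps `Ψ` and `Γ` satisfy the corresponding one-cocycle identities on the
Galilei group. -/
theorem PsiF_GamF_cocycle (α γv : Fin 3 → ℝ) (β : ℝ)
    (g g' : GalElt) (hg : g.2.2.2 ∈ SO3) (hg' : g'.2.2.2 ∈ SO3) :
    (∀ i, PsiF α (galMul g g') i =
      PsiF α g i + ∑ l, g.2.2.2 i l * PsiF α g' l) ∧
    (∀ i, GamF α γv β (galMul g g') i =
      GamF α γv β g i + (∑ l, g.2.2.2 i l * GamF α γv β g' l)
        - ∑ n, ∑ k, ∑ l, eps i n k * g.2.2.1 n * g.2.2.2 k l * PsiF α g' l) := by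
  obtain ⟨horth, hdet⟩ := hg
  have hadj : g.2.2.2.transpose = g.2.2.2.adjugate := by
    have h2 := Matrix.mul_adjugate g.2.2.2
    rw [hdet, one_smul] at h2
    exact Matrix.right_inv_eq_right_inv horth h2
  rw [Matrix.adjugate_fin_three g.2.2.2] at hadj
  have e : ∀ i j : Fin 3, g.2.2.2 j i =
      (!![g.2.2.2 1 1 * g.2.2.2 2 2 - g.2.2.2 1 2 * g.2.2.2 2 1,
      -(g.2.2.2 0 1 * g.2.2.2 2 2) + g.2.2.2 0 2 * g.2.2.2 2 1,
      g.2.2.2 0 1 * g.2.2.2 1 2 - g.2.2.2 0 2 * g.2.2.2 1 1;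
      -(g.2.2.2 1 0 * g.2.2.2 2 2) + g.2.2.2 1 2 * g.2.2.2 2 0,
      g.2.2.2 0 0 * g.2.2.2 2 2 - g.2.2.2 0 2 * g.2.2.2 2 0,
      -(g.2.2.2 0 0 * g.2.2.2 1 2) + g.2.2.2 0 2 * g.2.2.2 1 0;
      g.2.2.2 1 0 * g.2.2.2 2 1 - g.2.2.2 1 1 * g.2.2.2 2 0,
      -(g.2.2.2 0 0 * g.2.2.2 2 1) + g.2.2.2 0 1 * g.2.2.2 2 0,
      g.2.2.2 0 0 * g.2.2.2 1 1 - g.2.2.2 0 1 * g.2.2.2 1 0] : Matrix (Fin 3) (Fin 3) ℝ) i j :=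
    fun i j => congrFun (congrFun hadj i) j
  have h00 : g.2.2.2 0 0 = g.2.2.2 1 1 * g.2.2.2 2 2 - g.2.2.2 1 2 * g.2.2.2 2 1 := by simpa using e 0 0
  have h01 : g.2.2.2 0 1 = -(g.2.2.2 1 0 * g.2.2.2 2 2) + g.2.2.2 1 2 * g.2.2.2 2 0 := by simpa using e 1 0
  have h02 : g.2.2.2 0 2 = g.2.2.2 1 0 * g.2.2.2 2 1 - g.2.2.2 1 1 * g.2.2.2 2 0 := by simpa using e 2 0
  have h10 : g.2.2.2 1 0 = -(g.2.2.2 0 1 * g.2.2.2 2 2) + g.2.2.2 0 2 * g.2.2.2 2 1 := by simpa using e 0 1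
  have h11 : g.2.2.2 1 1 = g.2.2.2 0 0 * g.2.2.2 2 2 - g.2.2.2 0 2 * g.2.2.2 2 0 := by simpa using e 1 1
  have h12 : g.2.2.2 1 2 = -(g.2.2.2 0 0 * g.2.2.2 2 1) + g.2.2.2 0 1 * g.2.2.2 2 0 := by simpa using e 2 1
  have h20 : g.2.2.2 2 0 = g.2.2.2 0 1 * g.2.2.2 1 2 - g.2.2.2 0 2 * g.2.2.2 1 1 := by simpa using e 0 2
  have h21 : g.2.2.2 2 1 = -(g.2.2.2 0 0 * g.2.2.2 1 2) + g.2.2.2 0 2 * g.2.2.2 1 0 := by simpa using e 1 2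
  have h22 : g.2.2.2 2 2 = g.2.2.2 0 0 * g.2.2.2 1 1 - g.2.2.2 0 1 * g.2.2.2 1 0 := by simpa using e 2 2
  clear e hadj horth hdet hg'
  have key3 : ∀ i : Fin 3, i = 0 ∨ i = 1 ∨ i = 2 := by decide
  constructor
  · intro i
    rcases key3 i with rfl | rfl | rfl <;>
      simp only [PsiF, galMul, Fin.sum_univ_three, Matrix.mul_apply,
        Matrix.mulVec, dotProduct, Pi.add_apply, Pi.smul_apply, smul_eq_mul,
        Fin.isValue, eps_000, eps_001, eps_002, eps_010, eps_011, eps_012, eps_020, eps_021, eps_022, eps_100, eps_101, eps_102, eps_110, eps_111, eps_112, eps_120, eps_121, eps_122, eps_200, eps_201, eps_202, eps_210, eps_211, eps_212, eps_220, eps_221, eps_222, kron_00, kron_01, kron_02, kron_10, kron_11, kron_12, kron_20, kron_21, kron_22] <;> ring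
  · intro i
    rcases key3 i with rfl | rfl | rfl <;>
      simp only [PsiF, GamF, galMul, Fin.sum_univ_three, Matrix.mul_apply,
        Matrix.mulVec, dotProduct, Pi.add_apply, Pi.smul_apply, smul_eq_mul,
        Fin.isValue, eps_000, eps_001, eps_002, eps_010, eps_011, eps_012, eps_020, eps_021, eps_022, eps_100, eps_101, eps_102, eps_110, eps_111, eps_112, eps_120, eps_121, eps_122, eps_200, eps_201, eps_202, eps_210, eps_211, eps_212, eps_220, eps_221, eps_222, kron_00, kron_01, kron_02, kron_10, kron_11, kron_12, kron_20, kron_21, kron_22, mul_zero, zero_mul, add_zero, zero_add, mul_one, one_mul,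
        neg_mul, mul_neg, sub_zero]
    · rw [h00, h01, h02]; ring
    · rw [h10, h11, h12]; ring
    · rw [h20, h21, h22]; ring
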